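/- Let A and B be unimodular positive-definite Hermitian 2×2 complex matrices, with diagonal entries a_A = A₁₁, d_A = A₂₂, a_B = B₁₁, d_B = B₂₂ (all strictly positive reals). Then (1/4)·|log((a_B·d_A)/(a_A·d_B))| ≤ dist(A, B). Equivalently, the distance between the diagonal projections diag(√(a_A/d_A), √(d_A/a_A)) and diag(√(a_B/d_B), √(d_B/a_B)) is at most dist(A, B). -/

import Mathlib

open Matrix
open scoped ComplexOrder

/-!
Let `r = (a_B d_A) / (a_A d_B)`. For real `μ`, unimodularity gives
`det (B - μA) = 1 - μ t + μ²` with `t = tr (adj A · B)`, and the elementary inequality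
`√r + 1/√r ≤ t` (AM–GM together with Cauchy–Schwarz for the off-diagonal entries) makes this
determinant nonpositive for `μ = √r` and for `μ = 1/√r`. A `2 × 2` Hermitian matrix with
nonpositive determinant is not negative definite, so some `v ≠ 0` has `v* B v ≥ μ · v* A v`,
whence `dist(A, B) ≥ ½ log μ = ± ¼ log r`.
-/

/-- The hyperbolic distance between two hermitian inner products on `ℂ²` (represented by
positive-definite matrices inducing the same volume): the maximal logarithmic expansion
of the `B`-norm relative to the `A`-norm. -/
noncomputable def hdist (A B : Matrix (Fin 2) (Fin 2) ℂ) : ℝ :=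
  ⨆ v : {v : Fin 2 → ℂ // v ≠ 0},
    (1 / 2) * Real.log ((star v.1 ⬝ᵥ B.mulVec v.1).re / (star v.1 ⬝ᵥ A.mulVec v.1).re)

lemma Matrix.IsHermitian.im_apply_self {n : Type*} {M : Matrix n n ℂ} (hM : M.IsHermitian)
    (i : n) : (M i i).im = 0 :=
  Complex.conj_eq_iff_im.mp (hM.apply i i)

lemma Matrix.PosDef.re_apply_self_pos {n : Type*} {M : Matrix n n ℂ} (hM : M.PosDef) (i : n) :
    0 < (M i i).re :=
  (Complex.pos_iff.mp hM.diag_pos).1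

section QuadraticForm

variable {n : Type*} [Fintype n]

lemma re_star_smul_dotProduct_mulVec_smul (M : Matrix n n ℂ) (c : ℝ) (v : n → ℂ) :
    (star (c • v) ⬝ᵥ M *ᵥ (c • v)).re = c ^ 2 * (star v ⬝ᵥ M *ᵥ v).re := by
  rw [star_smul, star_trivial, mulVec_smul, dotProduct_smul, smul_dotProduct, smul_smul, ← sq,
    Complex.real_smul, Complex.re_ofReal_mul]

/-- The Rayleigh quotient is scale invariant, so it suffices to bound it on the unit sphere,
which is compact. -/
lemma bddAbove_range_re_dotProduct_mulVec_div {A : Matrix n n ℂ} (hA : A.PosDef)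
    (B : Matrix n n ℂ) :
    BddAbove (Set.range fun v : {v : n → ℂ // v ≠ 0} ↦
      (star v.1 ⬝ᵥ B *ᵥ v.1).re / (star v.1 ⬝ᵥ A *ᵥ v.1).re) := by
  set f : (n → ℂ) → ℝ := fun v ↦ (star v ⬝ᵥ B *ᵥ v).re / (star v ⬝ᵥ A *ᵥ v).re
  have hcont : ContinuousOn f (Metric.sphere 0 1) :=
    ContinuousOn.div (by fun_prop) (by fun_prop) fun v hv ↦
      (hA.re_dotProduct_pos (ne_zero_of_mem_unit_sphere ⟨v, hv⟩)).ne'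
  obtain ⟨C, hC⟩ := (isCompact_sphere (0 : n → ℂ) 1).bddAbove_image hcont
  refine ⟨C, ?_⟩
  rintro _ ⟨⟨v, hv⟩, rfl⟩
  have hnorm : ‖v‖ ≠ 0 := norm_ne_zero_iff.mpr hv
  have hunit : ‖v‖⁻¹ • v ∈ Metric.sphere (0 : n → ℂ) 1 := by simp [norm_smul, hnorm]
  have hscale : f (‖v‖⁻¹ • v) = f v := by
    simp only [f, re_star_smul_dotProduct_mulVec_smul]
    exact mul_div_mul_left _ _ (by positivity)
  change f v ≤ C
  exact hscale ▸ hC ⟨_, hunit, rfl⟩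

/-- In even dimension `det (-C) = det C`, so a negative definite `C` has positive determinant. -/
lemma exists_ne_zero_re_dotProduct_mulVec_nonneg [DecidableEq n] (hn : Even (Fintype.card n))
    {C : Matrix n n ℂ} (hC : C.IsHermitian) (hdet : C.det.re ≤ 0) :
    ∃ v ≠ 0, 0 ≤ (star v ⬝ᵥ C *ᵥ v).re := by
  by_contra! hneg
  have hpos : (-C).PosDef := by
    refine .of_dotProduct_mulVec_pos hC.neg fun v hv ↦ ?_
    rw [neg_mulVec, dotProduct_neg, Complex.pos_iff, Complex.neg_re, Complex.neg_im, neg_pos,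
      zero_eq_neg]
    exact ⟨hneg v hv, hC.im_star_dotProduct_mulVec_self v⟩
  have hdet_pos := hpos.det_pos
  rw [det_neg, hn.neg_one_pow, one_mul] at hdet_pos
  exact (Complex.pos_iff.mp hdet_pos).1.not_ge hdet

end QuadraticForm

lemma det_sub_smul_fin_two {R : Type*} [CommRing R] (A B : Matrix (Fin 2) (Fin 2) R) (μ : R) :
    (B - μ • A).det = B.det - μ * (A.adjugate * B).trace + μ ^ 2 * A.det := by
  rw [trace_fin_two, mul_apply, mul_apply, Fin.sum_univ_two, Fin.sum_univ_two, adjugate_fin_two,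
    det_fin_two, det_fin_two, det_fin_two]
  simp only [Matrix.sub_apply, Matrix.smul_apply, smul_eq_mul, of_apply, cons_val', cons_val_zero,
    cons_val_fin_one, cons_val_one, neg_mul]
  ring

lemma Matrix.IsHermitian.re_det_fin_two {M : Matrix (Fin 2) (Fin 2) ℂ} (hM : M.IsHermitian) :
    M.det.re = (M 0 0).re * (M 1 1).re - ‖M 0 1‖ ^ 2 := by
  rw [det_fin_two, ← hM.apply 1 0, Complex.star_def, Complex.mul_conj, Complex.sq_norm]
  simp [Complex.mul_re, hM.im_apply_self]

lemma Matrix.IsHermitian.re_mul_re_eq_one_add_sq_norm_fin_two {M : Matrix (Fin 2) (Fin 2) ℂ}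
    (hM : M.IsHermitian) (hdet : M.det = 1) : (M 0 0).re * (M 1 1).re = 1 + ‖M 0 1‖ ^ 2 := by
  have h := hM.re_det_fin_two
  rw [hdet, Complex.one_re] at h
  linarith

lemma Matrix.IsHermitian.re_trace_adjugate_mul_fin_two {A B : Matrix (Fin 2) (Fin 2) ℂ}
    (hA : A.IsHermitian) (hB : B.IsHermitian) :
    (A.adjugate * B).trace.re =
      (B 0 0).re * (A 1 1).re + (A 0 0).re * (B 1 1).re - 2 * (A 0 1 * B 1 0).re := by
  rw [trace_fin_two, mul_apply, mul_apply, Fin.sum_univ_two, Fin.sum_univ_two, adjugate_fin_two,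
    ← hA.apply 1 0, ← hB.apply 0 1]
  simp only [RCLike.star_def, of_apply, cons_val', cons_val_zero, cons_val_fin_one, cons_val_one,
    neg_mul, Complex.add_re, Complex.mul_re, Complex.neg_re, Complex.conj_re, Complex.conj_im,
    hA.im_apply_self, hB.im_apply_self]
  ring

lemma div_add_div_le_sq_add_sq {x y β β' : ℝ} (hx : 0 < x) (hy : 0 < y) (hβ : 0 ≤ β)
    (hβ' : 0 ≤ β') (h : (x * y) ^ 2 = (1 + β ^ 2) * (1 + β' ^ 2)) :
    x / y + y / x ≤ x ^ 2 + y ^ 2 - 2 * β * β' := by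
  have hxy : 0 < x * y := mul_pos hx hy
  have hCS : 1 + β * β' ≤ x * y := by nlinarith [sq_nonneg (β - β'), mul_nonneg hβ hβ']
  have hAMGM : 2 * (x * y) ≤ x ^ 2 + y ^ 2 := by nlinarith [sq_nonneg (x - y)]
  have hsum : x / y + y / x = (x ^ 2 + y ^ 2) / (x * y) := by field_simp
  rw [hsum, div_le_iff₀ hxy]
  nlinarith [mul_le_mul_of_nonneg_left hAMGM (by nlinarith [mul_nonneg hβ hβ'] : 0 ≤ x * y - 1)]

lemma sqrt_add_inv_sqrt_le_re_trace_adjugate_mul {A B : Matrix (Fin 2) (Fin 2) ℂ}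
    (hA : A.PosDef) (hAdet : A.det = 1) (hB : B.PosDef) (hBdet : B.det = 1) :
    √(((B 0 0).re * (A 1 1).re) / ((A 0 0).re * (B 1 1).re)) +
        (√(((B 0 0).re * (A 1 1).re) / ((A 0 0).re * (B 1 1).re)))⁻¹ ≤
      (A.adjugate * B).trace.re := by
  have ha := hA.re_apply_self_pos 0
  have hd := hA.re_apply_self_pos 1
  have ha' := hB.re_apply_self_pos 0
  have hd' := hB.re_apply_self_pos 1
  have hx2 := Real.sq_sqrt (mul_pos ha' hd).le
  have hy2 := Real.sq_sqrt (mul_pos ha hd').le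
  have hB10 : ‖B 1 0‖ = ‖B 0 1‖ := by rw [← hB.isHermitian.apply 0 1, norm_star]
  have hcross : (A 0 1 * B 1 0).re ≤ ‖A 0 1‖ * ‖B 1 0‖ :=
    (Complex.re_le_norm _).trans (norm_mul _ _).le
  rw [Real.sqrt_div (mul_pos ha' hd).le, inv_div, hA.isHermitian.re_trace_adjugate_mul_fin_two
    hB.isHermitian]
  calc _ ≤ √((B 0 0).re * (A 1 1).re) ^ 2 + √((A 0 0).re * (B 1 1).re) ^ 2
          - 2 * ‖A 0 1‖ * ‖B 1 0‖ := by
        refine div_add_div_le_sq_add_sq (by positivity) (by positivity) (norm_nonneg _)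
          (norm_nonneg _) ?_
        rw [mul_pow, hx2, hy2, hB10, ← hA.1.re_mul_re_eq_one_add_sq_norm_fin_two hAdet,
          ← hB.1.re_mul_re_eq_one_add_sq_norm_fin_two hBdet]
        ring
    _ ≤ _ := by rw [hx2, hy2]; linarith

lemma half_log_le_hdist {A B : Matrix (Fin 2) (Fin 2) ℂ} (hA : A.PosDef) (hB : B.PosDef)
    {μ : ℝ} (hμ : 0 < μ) {v : Fin 2 → ℂ} (hv : v ≠ 0)
    (h : μ * (star v ⬝ᵥ A *ᵥ v).re ≤ (star v ⬝ᵥ B *ᵥ v).re) :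
    1 / 2 * Real.log μ ≤ hdist A B := by
  have hbdd : BddAbove (Set.range fun v : {v : Fin 2 → ℂ // v ≠ 0} ↦
      1 / 2 * Real.log ((star v.1 ⬝ᵥ B *ᵥ v.1).re / (star v.1 ⬝ᵥ A *ᵥ v.1).re)) := by
    obtain ⟨C, hC⟩ := bddAbove_range_re_dotProduct_mulVec_div hA B
    refine ⟨1 / 2 * C, ?_⟩
    rintro _ ⟨w, rfl⟩
    have hratio : 0 ≤ (star w.1 ⬝ᵥ B *ᵥ w.1).re / (star w.1 ⬝ᵥ A *ᵥ w.1).re :=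
      div_nonneg (hB.re_dotProduct_pos w.2).le (hA.re_dotProduct_pos w.2).le
    have := (Real.log_le_self hratio).trans (hC ⟨w, rfl⟩)
    dsimp only
    linarith
  refine le_trans ?_ (le_ciSup hbdd ⟨v, hv⟩)
  have hQA : 0 < (star v ⬝ᵥ A *ᵥ v).re := hA.re_dotProduct_pos hv
  gcongr
  rwa [le_div_iff₀ hQA]

lemma half_log_le_hdist_of_add_inv_le {A B : Matrix (Fin 2) (Fin 2) ℂ} (hA : A.PosDef)
    (hAdet : A.det = 1) (hB : B.PosDef) (hBdet : B.det = 1) {μ : ℝ} (hμ : 0 < μ)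
    (h : μ + μ⁻¹ ≤ (A.adjugate * B).trace.re) :
    1 / 2 * Real.log μ ≤ hdist A B := by
  have hC : (B - (μ : ℂ) • A).IsHermitian := hB.1.sub (hA.1.smul (Complex.conj_ofReal μ))
  have hdet : (B - (μ : ℂ) • A).det.re ≤ 0 := by
    rw [det_sub_smul_fin_two, hAdet, hBdet, ← Complex.ofReal_pow]
    simp only [Complex.add_re, Complex.sub_re, Complex.one_re, Complex.re_ofReal_mul, mul_one,
      Complex.ofReal_re]
    have hμμ : μ * (μ + μ⁻¹) = μ ^ 2 + 1 := by field_simp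
    nlinarith [mul_le_mul_of_nonneg_left h hμ.le]
  obtain ⟨v, hv, hQ⟩ := exists_ne_zero_re_dotProduct_mulVec_nonneg (by simp) hC hdet
  refine half_log_le_hdist hA hB hμ hv ?_
  rw [sub_mulVec, smul_mulVec, dotProduct_sub, dotProduct_smul, smul_eq_mul, Complex.sub_re,
    Complex.re_ofReal_mul] at hQ
  linarith

/-- For unimodular positive-definite Hermitian `2×2` matrices `A, B` with
diagonal entries `a_A, d_A, a_B, d_B`, the distance between the projections to the diagonal
geodesic is at most `dist(A, B)`:
`(1/4)·|log((a_B·d_A)/(a_A·d_B))| ≤ dist(A, B)`. -/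
theorem diagonal_projection_contracts (A B : Matrix (Fin 2) (Fin 2) ℂ)
    (hA : A.PosDef) (hAdet : A.det = 1)
    (hB : B.PosDef) (hBdet : B.det = 1) :
    (1 / 4) * |Real.log (((B 0 0).re * (A 1 1).re) / ((A 0 0).re * (B 1 1).re))|
      ≤ hdist A B := by
  set r := ((B 0 0).re * (A 1 1).re) / ((A 0 0).re * (B 1 1).re)
  have hr : 0 < r := by
    have := hA.re_apply_self_pos 0; have := hA.re_apply_self_pos 1
    have := hB.re_apply_self_pos 0; have := hB.re_apply_self_pos 1
    positivity
  have hsqrt : 0 < √r := Real.sqrt_pos.mpr hr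
  have hsum := sqrt_add_inv_sqrt_le_re_trace_adjugate_mul hA hAdet hB hBdet
  have hup := half_log_le_hdist_of_add_inv_le hA hAdet hB hBdet hsqrt hsum
  have hdown := half_log_le_hdist_of_add_inv_le hA hAdet hB hBdet (inv_pos.mpr hsqrt)
    (by rwa [inv_inv, add_comm])
  rw [Real.log_inv, Real.log_sqrt hr.le] at hdown
  rw [Real.log_sqrt hr.le] at hup
  cases abs_cases (Real.log r) <;> linarith
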